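/- arXiv:2012.13879 — 3 statements merged into one kernel-verified Lean document; each statement's English description precedes it below -/
import Mathlib

section
/- The function T₁(y) = [(1−y⁴)·log(1+y²) + 2y⁴ − y² − 4y²·∫₁^y (log(1+x²)/x) dx] / (2y(1+y²)) is twice differentiable on (0,∞) and satisfies (H T₁)(y) = Λφ(y) for every y > 0. -/
/-! Put `L y = log (1 + y²)` and `J y = ∫₁^y L x / x dx`. Since `L' = 2y/(1+y²)` and `J' = L/y`
on `(0,∞)`, the functions `p L + q + r J` with rational coefficients `p, q, r` are closed under
differentiation there. `T₁` has this form, hence so do `T₁'` and `T₁''`, with explicit coefficients,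
and `H T₁ = Λφ` becomes an identity between rational functions. -/

open MeasureTheory

noncomputable section

/-- The potential `V(y) = (y⁴-6y²+1)/(1+y²)²`. -/
def Vf (y : ℝ) : ℝ := (y ^ 4 - 6 * y ^ 2 + 1) / (1 + y ^ 2) ^ 2

/-- The linearized Hamiltonian `H f = -f'' - f'/y + V f / y²`. -/
def Hop (f : ℝ → ℝ) (y : ℝ) : ℝ :=
  -(deriv (deriv f) y) - deriv f y / y + Vf y * f y / y ^ 2

/-- The resonance `Λφ(y) = 2y/(1+y²)`. -/
def Lphi (y : ℝ) : ℝ := 2 * y / (1 + y ^ 2)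

/-- The explicit profile `T₁` solving `H T₁ = Λφ`. -/
def T1 (y : ℝ) : ℝ :=
  ((1 - y ^ 4) * Real.log (1 + y ^ 2) + 2 * y ^ 4 - y ^ 2
      - 4 * y ^ 2 * ∫ x in (1 : ℝ)..y, Real.log (1 + x ^ 2) / x)
    / (2 * y * (1 + y ^ 2))

open Set Filter Topology

theorem hasDerivAt_integral_of_continuousOn_Ioi {f : ℝ → ℝ} {c a y : ℝ}
    (hf : ContinuousOn f (Ioi c)) (ha : c < a) (hy : c < y) :
    HasDerivAt (fun u => ∫ x in a..u, f x) (f y) y := by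
  have hsub : uIcc a y ⊆ Ioi c := fun z hz => lt_of_lt_of_le (lt_min ha hy) hz.1
  exact intervalIntegral.integral_hasDerivAt_right (hf.mono hsub).intervalIntegrable
    (hf.stronglyMeasurableAtFilter isOpen_Ioi y hy) (hf.continuousAt (Ioi_mem_nhds hy))

def logOneAddSqIntegral (y : ℝ) : ℝ := ∫ x in (1 : ℝ)..y, Real.log (1 + x ^ 2) / x

theorem hasDerivAt_logOneAddSqIntegral {y : ℝ} (hy : 0 < y) :
    HasDerivAt logOneAddSqIntegral (Real.log (1 + y ^ 2) / y) y := by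
  have hcont : ContinuousOn (fun x : ℝ => Real.log (1 + x ^ 2) / x) (Ioi 0) :=
    ((by fun_prop : Continuous fun x : ℝ => 1 + x ^ 2).log fun x => by positivity).continuousOn.div
      continuousOn_id fun x hx => hx.ne'
  exact hasDerivAt_integral_of_continuousOn_Ioi hcont one_pos hy

theorem hasDerivAt_log_one_add_sq (y : ℝ) :
    HasDerivAt (fun u => Real.log (1 + u ^ 2)) (2 * y / (1 + y ^ 2)) y := by
  convert ((hasDerivAt_pow 2 y).const_add 1).log (by positivity) using 1
  ring

def logForm (p q r : ℝ → ℝ) (y : ℝ) : ℝ :=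
  p y * Real.log (1 + y ^ 2) + q y + r y * logOneAddSqIntegral y

theorem hasDerivAt_logForm {p q r : ℝ → ℝ} {p' q' r' y : ℝ} (hp : HasDerivAt p p' y)
    (hq : HasDerivAt q q' y) (hr : HasDerivAt r r' y) (hy : 0 < y) :
    HasDerivAt (logForm p q r)
      ((p' + r y / y) * Real.log (1 + y ^ 2) + (q' + 2 * y * p y / (1 + y ^ 2))
        + r' * logOneAddSqIntegral y) y :=
  (((hp.mul (hasDerivAt_log_one_add_sq y)).add hq).add
    (hr.mul (hasDerivAt_logOneAddSqIntegral hy))).congr_deriv (by ring)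

theorem T1_eq_logForm :
    T1 = logForm (fun y => (1 - y ^ 4) / (2 * y * (1 + y ^ 2)))
      (fun y => (2 * y ^ 4 - y ^ 2) / (2 * y * (1 + y ^ 2)))
      (fun y => -(4 * y ^ 2) / (2 * y * (1 + y ^ 2))) := by
  funext y
  simp only [T1, logForm, logOneAddSqIntegral]
  ring

def T1' : ℝ → ℝ :=
  logForm (fun y => -(y ^ 4 + 6 * y ^ 2 + 1) / (2 * y ^ 2 * (1 + y ^ 2)))
    (fun y => (1 + 7 * y ^ 2) / (2 * (1 + y ^ 2) ^ 2))
    (fun y => -(2 * (1 - y ^ 2)) / (1 + y ^ 2) ^ 2)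

def T1'' : ℝ → ℝ :=
  logForm (fun y => (7 * y ^ 4 + 1) / (y ^ 3 * (1 + y ^ 2) ^ 2))
    (fun y => -(y ^ 6 + 14 * y ^ 4 + 2 * y ^ 2 + 1) / (y * (1 + y ^ 2) ^ 3))
    (fun y => -(4 * y * (y ^ 2 - 3)) / (1 + y ^ 2) ^ 3)

theorem hasDerivAt_T1 {y : ℝ} (hy : 0 < y) : HasDerivAt T1 (T1' y) y := by
  have hden := ((hasDerivAt_id y).const_mul 2).mul ((hasDerivAt_pow 2 y).const_add 1)
  have hden0 : 2 * y * (1 + y ^ 2) ≠ 0 := by positivity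
  have hp := ((hasDerivAt_pow 4 y).const_sub 1).div hden hden0
  have hq := (((hasDerivAt_pow 4 y).const_mul 2).sub (hasDerivAt_pow 2 y)).div hden hden0
  have hr := ((hasDerivAt_pow 2 y).const_mul 4).neg.div hden hden0
  rw [T1_eq_logForm]
  refine (hasDerivAt_logForm hp hq hr hy).congr_deriv ?_
  simp only [T1', logForm, Pi.div_apply, Pi.neg_apply, Pi.sub_apply, Pi.mul_apply, id]
  field_simp
  ring

theorem hasDerivAt_T1' {y : ℝ} (hy : 0 < y) : HasDerivAt T1' (T1'' y) y := by
  have h1 := (hasDerivAt_pow 2 y).const_add 1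
  have hp := (((hasDerivAt_pow 4 y).add ((hasDerivAt_pow 2 y).const_mul 6)).add_const 1).neg.div
    (((hasDerivAt_pow 2 y).const_mul 2).mul h1) (by positivity : 2 * y ^ 2 * (1 + y ^ 2) ≠ 0)
  have hq := (((hasDerivAt_pow 2 y).const_mul 7).const_add 1).div ((h1.pow 2).const_mul 2)
    (by positivity : 2 * (1 + y ^ 2) ^ 2 ≠ 0)
  have hr := (((hasDerivAt_pow 2 y).const_sub 1).const_mul 2).neg.div (h1.pow 2)
    (by positivity : (1 + y ^ 2) ^ 2 ≠ 0)
  refine (hasDerivAt_logForm hp hq hr hy).congr_deriv ?_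
  simp only [T1'', logForm, Pi.div_apply, Pi.neg_apply, Pi.add_apply, Pi.mul_apply, Pi.pow_apply]
  field_simp
  ring

theorem Hop_eq_of_hasDerivAt {f f' : ℝ → ℝ} {f'' y : ℝ}
    (hf : ∀ᶠ z in 𝓝 y, HasDerivAt f (f' z) z) (hf' : HasDerivAt f' f'' y) :
    Hop f y = -f'' - f' y / y + Vf y * f y / y ^ 2 := by
  have hderiv : deriv f =ᶠ[𝓝 y] f' := hf.mono fun z hz => hz.deriv
  rw [Hop, hderiv.deriv_eq, hf'.deriv, hf.self_of_nhds.deriv]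

theorem T1_ode {y : ℝ} (hy : 0 < y) :
    -T1'' y - T1' y / y + Vf y * T1 y / y ^ 2 = Lphi y := by
  rw [T1_eq_logForm]
  simp only [T1', T1'', logForm, Vf, Lphi]
  field_simp
  ring

/-- `T₁` is twice differentiable on `(0,∞)` and satisfies `H T₁ = Λφ` there. -/
theorem H_T1_eq_Lphi :
    ∀ y > (0 : ℝ),
      (DifferentiableAt ℝ T1 y ∧ DifferentiableAt ℝ (deriv T1) y) ∧
      Hop T1 y = Lphi y := by
  intro y hy
  have hT1 : ∀ᶠ z in 𝓝 y, HasDerivAt T1 (T1' z) z :=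
    eventually_of_mem (Ioi_mem_nhds hy) fun z hz => hasDerivAt_T1 hz
  have hderiv : deriv T1 =ᶠ[𝓝 y] T1' := hT1.mono fun z hz => hz.deriv
  refine ⟨⟨hT1.self_of_nhds.differentiableAt,
    hderiv.differentiableAt_iff.mpr (hasDerivAt_T1' hy).differentiableAt⟩, ?_⟩
  rw [Hop_eq_of_hasDerivAt hT1 (hasDerivAt_T1' hy)]
  exact T1_ode hy

end
end

section
/- For every y > 0: (i) ∫₀^y x·(Λφ(x))² dx = 2·log(1+y²) − 2y²/(1+y²); (ii) y·Λφ(y)·(A T₁)(y) = 2·log(1+y²) − 2y²/(1+y²), i.e. A T₁ = (1/(y·Λφ))·∫₀^y x·(Λφ(x))² dx, where (A T₁)(y) = −T₁'(y) + (Z(y)/y)·T₁(y). -/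
/-!
Since `Z/y = 1/y - 2y/(1+y²)` is the logarithmic derivative of `Λφ`, the resonance spans the
kernel of `A`, and `A (Λφ g) = -Λφ g'`. Writing `T₁ = Λφ G` with the explicit `G = T₁/Λφ`, whose
derivative is elementary (the integral term of `G` differentiates to `log(1+y²)/y`), part (ii)
becomes an algebraic identity. Part (i) is the fundamental theorem of calculus.
-/

open MeasureTheory

noncomputable section

/-- `Z(y) = (1-y²)/(1+y²)`. -/
def Zf (y : ℝ) : ℝ := (1 - y ^ 2) / (1 + y ^ 2)

/-- The first order factor `A f = -f' + (Z/y) f`. -/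
def Aop (f : ℝ → ℝ) (y : ℝ) : ℝ := -deriv f y + Zf y / y * f y

def lphiMass (y : ℝ) : ℝ := 2 * Real.log (1 + y ^ 2) - 2 * y ^ 2 / (1 + y ^ 2)

theorem hasDerivAt_lphiMass (x : ℝ) : HasDerivAt lphiMass (x * Lphi x ^ 2) x := by
  have hx : (0 : ℝ) < 1 + x ^ 2 := by positivity
  have hsq : HasDerivAt (fun t : ℝ => 1 + t ^ 2) (2 * x) x := by
    simpa using (hasDerivAt_pow 2 x).const_add 1
  have hnum : HasDerivAt (fun t : ℝ => 2 * t ^ 2) (2 * (2 * x)) x := by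
    simpa using (hasDerivAt_pow 2 x).const_mul 2
  refine (((hsq.log hx.ne').const_mul 2).sub (hnum.div hsq hx.ne')).congr_deriv ?_
  simp only [Lphi]
  field_simp
  ring

theorem integral_mul_Lphi_sq (y : ℝ) : ∫ x in (0 : ℝ)..y, x * Lphi x ^ 2 = lphiMass y := by
  have hcont : Continuous fun x : ℝ => x * Lphi x ^ 2 := by
    have hLphi : Continuous Lphi :=
      (continuous_const.mul continuous_id).div (by fun_prop) fun x => by positivity
    fun_prop
  rw [intervalIntegral.integral_eq_sub_of_hasDerivAt (fun x _ => hasDerivAt_lphiMass x)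
    (hcont.intervalIntegrable 0 y)]
  simp [lphiMass]

theorem hasDerivAt_Lphi {y : ℝ} (hy : y ≠ 0) : HasDerivAt Lphi (Zf y / y * Lphi y) y := by
  have hpos : (0 : ℝ) < 1 + y ^ 2 := by positivity
  have hsq : HasDerivAt (fun t : ℝ => 1 + t ^ 2) (2 * y) y := by
    simpa using (hasDerivAt_pow 2 y).const_add 1
  refine (((hasDerivAt_id y).const_mul 2).div hsq hpos.ne').congr_deriv ?_
  simp only [Zf, Lphi, id]
  field_simp
  ring

theorem Aop_Lphi_mul {g : ℝ → ℝ} {g' y : ℝ} (hg : HasDerivAt g g' y) (hy : y ≠ 0) :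
    Aop (fun t => Lphi t * g t) y = -Lphi y * g' := by
  have hprod : HasDerivAt (fun t => Lphi t * g t) (Zf y / y * Lphi y * g y + Lphi y * g') y :=
    (hasDerivAt_Lphi hy).mul hg
  rw [Aop, hprod.deriv]
  ring

theorem hasDerivAt_integral_log_one_add_sq_div {y : ℝ} (hy : 0 < y) :
    HasDerivAt (fun t => ∫ x in (1 : ℝ)..t, Real.log (1 + x ^ 2) / x)
      (Real.log (1 + y ^ 2) / y) y := by
  have hcont : ContinuousOn (fun x : ℝ => Real.log (1 + x ^ 2) / x) (Set.Ioi 0) :=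
    ((Continuous.log (by fun_prop) fun x => by positivity).continuousOn.div continuousOn_id
      fun x hx => (Set.mem_Ioi.mp hx).ne')
  have hsub : Set.uIcc (1 : ℝ) y ⊆ Set.Ioi 0 := fun x hx =>
    lt_of_lt_of_le (lt_min one_pos hy) hx.1
  exact intervalIntegral.integral_hasDerivAt_right ((hcont.mono hsub).intervalIntegrable)
    (hcont.stronglyMeasurableAtFilter isOpen_Ioi y hy)
    (hcont.continuousAt (isOpen_Ioi.mem_nhds hy))

def T1DivLphi (t : ℝ) : ℝ :=
  ((1 - t ^ 4) * Real.log (1 + t ^ 2) + 2 * t ^ 4 - t ^ 2) / (4 * t ^ 2)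
    - ∫ x in (1 : ℝ)..t, Real.log (1 + x ^ 2) / x

theorem T1_eq_Lphi_mul : T1 = fun t => Lphi t * T1DivLphi t := by
  funext t
  rcases eq_or_ne t 0 with rfl | ht
  · simp [T1, Lphi] -- both sides are division-by-zero junk values `0`
  · simp only [T1, Lphi, T1DivLphi]
    field_simp
    ring

theorem hasDerivAt_T1DivLphi {y : ℝ} (hy : 0 < y) :
    HasDerivAt T1DivLphi
      (-((1 + y ^ 2) * ((1 + y ^ 2) * Real.log (1 + y ^ 2) - y ^ 2)) / (2 * y ^ 3)) y := by
  have hpos : (0 : ℝ) < 1 + y ^ 2 := by positivity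
  have hsq : HasDerivAt (fun t : ℝ => 1 + t ^ 2) (2 * y) y := by
    simpa using (hasDerivAt_pow 2 y).const_add 1
  have hquart : HasDerivAt (fun t : ℝ => 1 - t ^ 4) (-(4 * y ^ 3)) y := by
    simpa using (hasDerivAt_pow 4 y).const_sub 1
  have hnum : HasDerivAt
      (fun t : ℝ => (1 - t ^ 4) * Real.log (1 + t ^ 2) + 2 * t ^ 4 - t ^ 2)
      (-(4 * y ^ 3) * Real.log (1 + y ^ 2) + (1 - y ^ 4) * (2 * y / (1 + y ^ 2))
        + 2 * (4 * y ^ 3) - 2 * y) y := by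
    have h4 : HasDerivAt (fun t : ℝ => 2 * t ^ 4) (2 * (4 * y ^ 3)) y := by
      simpa using (hasDerivAt_pow 4 y).const_mul 2
    have h2 : HasDerivAt (fun t : ℝ => t ^ 2) (2 * y) y := by simpa using hasDerivAt_pow 2 y
    exact ((hquart.mul (hsq.log hpos.ne')).add h4).sub h2
  have hden : HasDerivAt (fun t : ℝ => 4 * t ^ 2) (4 * (2 * y)) y := by
    simpa using (hasDerivAt_pow 2 y).const_mul 4
  refine ((hnum.div hden (by positivity)).sub
    (hasDerivAt_integral_log_one_add_sq_div hy)).congr_deriv ?_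
  field_simp
  ring

theorem mul_Lphi_mul_Aop_T1 {y : ℝ} (hy : 0 < y) : y * Lphi y * Aop T1 y = lphiMass y := by
  rw [T1_eq_Lphi_mul, Aop_Lphi_mul (hasDerivAt_T1DivLphi hy) hy.ne']
  simp only [Lphi, lphiMass]
  field_simp

/-- The explicit formula `A T₁ = (1/(y Λφ)) ∫₀^y x Λφ(x)² dx
    = (2 log(1+y²) - 2y²/(1+y²)) / (y Λφ(y))`. -/
theorem AT1_formula :
    ∀ y > (0 : ℝ),
      (∫ x in (0 : ℝ)..y, x * (Lphi x) ^ 2)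
        = 2 * Real.log (1 + y ^ 2) - 2 * y ^ 2 / (1 + y ^ 2) ∧
      y * Lphi y * Aop T1 y
        = 2 * Real.log (1 + y ^ 2) - 2 * y ^ 2 / (1 + y ^ 2) :=
  fun _ hy => ⟨integral_mul_Lphi_sq _, mul_Lphi_mul_Aop_T1 hy⟩

end
end

section
/- Set L(y) = Z'(y) = −4y/(1+y²)² for y > 0. Then: (i) L'(y) = (2Z(y)−1)·L(y)/y for all y > 0; equivalently, for every differentiable g : (0,∞) → ℝ, A(L·g)(y) + L(y)·(A* g)(y) = (2L(y)/y)·g(y) for all y > 0; (ii) L(y) < 0 for all y > 0; (iii) for every smooth compactly supported f : (0,∞) → ℝ, ∫₀^∞ (H f)(y)·L(y)·(A f)(y)·y dy = ∫₀^∞ (L(y)/y)·((A f)(y))²·y dy ≤ 0. -/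
open MeasureTheory

noncomputable section

/-- The adjoint factor `A* f = f' + ((1+Z)/y) f`. -/
def Astar (f : ℝ → ℝ) (y : ℝ) : ℝ := deriv f y + (1 + Zf y) / y * f y

/-- `L(y) = Z'(y) = -4y/(1+y²)²`. -/
def Lf (y : ℝ) : ℝ := deriv Zf y

/-!
Since `V = Z² + y Z'`, the Hamiltonian factors as `H = A* A`, and `A*` is the adjoint of `A` in
`L²(y dy)`. For `g = A f`, the product rule and `L' = (2Z - 1) L / y` give
`(L g² y)' = 2 ((A* g) L g y - (L / y) g² y)`, the pointwise form of
`∫ (A* g) L g y = ∫ g A(L g) y` combined with (i). As `f` is supported in a compact subset of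
`(0, ∞)`, the left side integrates to zero; the sign comes from `L < 0`.
-/

open Set Filter Topology

lemma hasDerivAt_Zf (y : ℝ) : HasDerivAt Zf (-4 * y / (1 + y ^ 2) ^ 2) y := by
  have h : HasDerivAt Zf _ y := ((hasDerivAt_pow 2 y).const_sub 1).fun_div
    ((hasDerivAt_pow 2 y).const_add 1) (by positivity)
  convert h using 1
  field_simp
  ring

lemma Lf_eq (y : ℝ) : Lf y = -4 * y / (1 + y ^ 2) ^ 2 := (hasDerivAt_Zf y).deriv

lemma Lf_neg {y : ℝ} (hy : 0 < y) : Lf y < 0 := by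
  rw [Lf_eq]
  exact div_neg_of_neg_of_pos (by linarith) (by positivity)

@[fun_prop]
lemma continuous_Lf : Continuous Lf := by
  rw [funext Lf_eq]
  fun_prop (disch := intro x; positivity)

lemma hasDerivAt_Lf {y : ℝ} (hy : y ≠ 0) : HasDerivAt Lf ((2 * Zf y - 1) * Lf y / y) y := by
  have h : HasDerivAt (fun t => -4 * t / (1 + t ^ 2) ^ 2) _ y :=
    ((hasDerivAt_id' y).const_mul (-4)).fun_div (((hasDerivAt_pow 2 y).const_add 1).fun_pow 2)
      (by positivity)
  rw [funext Lf_eq]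
  convert h using 1
  rw [Zf]
  field_simp
  ring

lemma Aop_Lf_mul_add_Lf_mul_Astar {g : ℝ → ℝ} {y : ℝ} (hg : DifferentiableAt ℝ g y)
    (hy : y ≠ 0) : Aop (fun t => Lf t * g t) y + Lf y * Astar g y = 2 * Lf y / y * g y := by
  have hLg : HasDerivAt (fun t => Lf t * g t) _ y := (hasDerivAt_Lf hy).fun_mul hg.hasDerivAt
  rw [Aop, Astar, hLg.deriv]
  field_simp
  ring

lemma hasDerivAt_Aop {f : ℝ → ℝ} {y : ℝ} (hf : DifferentiableAt ℝ f y)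
    (hf' : DifferentiableAt ℝ (deriv f) y) (hy : y ≠ 0) :
    HasDerivAt (Aop f)
      (-deriv (deriv f) y + ((Lf y * y - Zf y) / y ^ 2 * f y + Zf y / y * deriv f y)) y := by
  have h : HasDerivAt (Aop f) _ y := hf'.hasDerivAt.neg.add
    (((hasDerivAt_Zf y).fun_div (hasDerivAt_id' y) hy).fun_mul hf.hasDerivAt)
  convert h using 1
  rw [Lf_eq]
  ring

lemma Hop_eq_Astar_Aop {f : ℝ → ℝ} {y : ℝ} (hf : DifferentiableAt ℝ f y)
    (hf' : DifferentiableAt ℝ (deriv f) y) (hy : y ≠ 0) : Hop f y = Astar (Aop f) y := by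
  rw [Hop, Astar, (hasDerivAt_Aop hf hf' hy).deriv, Aop, Vf, Zf, Lf_eq]
  field_simp
  ring

lemma hasDerivAt_Lf_mul_sq_mul_id {g : ℝ → ℝ} {y : ℝ} (hg : DifferentiableAt ℝ g y)
    (hy : y ≠ 0) : HasDerivAt (fun t => Lf t * g t ^ 2 * t)
      (2 * (Astar g y * Lf y * g y * y - Lf y / y * g y ^ 2 * y)) y := by
  have h : HasDerivAt (fun t => Lf t * g t ^ 2 * t) _ y :=
    ((hasDerivAt_Lf hy).fun_mul (hg.hasDerivAt.fun_pow 2)).fun_mul (hasDerivAt_id' y)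
  convert h using 1
  rw [Astar]
  field_simp
  ring

lemma Aop_eventuallyEq_zero {f : ℝ → ℝ} {y : ℝ} (hy : y ∉ tsupport f) : Aop f =ᶠ[𝓝 y] 0 := by
  have hf : f =ᶠ[𝓝 y] 0 := notMem_tsupport_iff_eventuallyEq.mp hy
  filter_upwards [hf, hf.deriv] with t ht ht'
  simp [Aop, ht, ht']

lemma continuousOn_Aop {f : ℝ → ℝ} (hf : Differentiable ℝ f) (hf' : Differentiable ℝ (deriv f)) :
    ContinuousOn (Aop f) (Ioi 0) := fun y hy =>
  (hasDerivAt_Aop (hf y) (hf' y) (ne_of_gt hy)).continuousAt.continuousWithinAt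

lemma continuousOn_Hop {f : ℝ → ℝ} (hf : ContDiff ℝ 2 f) : ContinuousOn (Hop f) (Ioi 0) := by
  have : Continuous f := hf.continuous
  have : Continuous (deriv f) := hf.differentiable_deriv_two.continuous
  have : Continuous (deriv (deriv f)) := (hf.deriv' (n := 1)).continuous_deriv_one
  unfold Hop Vf
  fun_prop (disch := intro x (hx : 0 < x); positivity)

lemma hasDerivAt_Lf_mul_Aop_sq_mul_id {f : ℝ → ℝ} (hf : Differentiable ℝ f)
    (hf' : Differentiable ℝ (deriv f)) (h0 : 0 ∉ tsupport f) (y : ℝ) :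
    HasDerivAt (fun t => Lf t * Aop f t ^ 2 * t)
      (2 * (Hop f y * Lf y * Aop f y * y - Lf y / y * Aop f y ^ 2 * y)) y := by
  by_cases hy : y ∈ tsupport f
  · have hy0 : y ≠ 0 := by rintro rfl; exact h0 hy
    rw [Hop_eq_Astar_Aop (hf y) (hf' y) hy0]
    exact hasDerivAt_Lf_mul_sq_mul_id (hasDerivAt_Aop (hf y) (hf' y) hy0).differentiableAt hy0
  · have hloc : (fun t => Lf t * Aop f t ^ 2 * t) =ᶠ[𝓝 y] fun _ => 0 := by
      filter_upwards [Aop_eventuallyEq_zero hy] with t ht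
      simp [ht]
    simpa [(Aop_eventuallyEq_zero hy).eq_of_nhds] using
      (hasDerivAt_const y (0 : ℝ)).congr_of_eventuallyEq hloc

lemma MeasureTheory.IntegrableOn.of_continuousOn_of_forall_notMem_eq_zero {X E : Type*}
    [TopologicalSpace X] [T2Space X] [MeasurableSpace X] [OpensMeasurableSpace X] {μ : Measure X}
    [IsFiniteMeasureOnCompacts μ] [NormedAddCommGroup E] {h : X → E} {s K : Set X} (hK : IsCompact K) (hKs : K ⊆ s)
    (hc : ContinuousOn h s) (h0 : ∀ x ∉ K, h x = 0) : IntegrableOn h s μ :=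
  (((hc.mono hKs).integrableOn_compact hK).integrable_of_forall_notMem_eq_zero h0).integrableOn

lemma integral_Ioi_of_hasDerivAt_of_hasCompactSupport {W D : ℝ → ℝ} {a : ℝ}
    (hW : ∀ x, HasDerivAt W (D x) x) (hD : IntegrableOn D (Ioi a)) (hc : HasCompactSupport W) :
    ∫ x in Ioi a, D x = -W a := by
  rw [integral_Ioi_of_hasDerivAt_of_tendsto' (fun x _ => hW x) hD
    (hc.is_zero_at_infty.mono_left atTop_le_cocompact), zero_sub]

lemma integral_Hop_mul_Lf_mul_Aop {f : ℝ → ℝ} (hf : ContDiff ℝ 2 f) (hsupp : HasCompactSupport f)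
    (hpos : tsupport f ⊆ Ioi 0) :
    ∫ y in Ioi 0, Hop f y * Lf y * Aop f y * y = ∫ y in Ioi 0, Lf y / y * Aop f y ^ 2 * y := by
  have hf1 : Differentiable ℝ f := hf.differentiable two_ne_zero
  have hf2 : Differentiable ℝ (deriv f) := hf.differentiable_deriv_two
  have hA0 (y : ℝ) (hy : y ∉ tsupport f) : Aop f y = 0 := (Aop_eventuallyEq_zero hy).eq_of_nhds
  have hAc := continuousOn_Aop hf1 hf2
  have hHc := continuousOn_Hop hf
  have hI₁ : IntegrableOn (fun y => Hop f y * Lf y * Aop f y * y) (Ioi 0) :=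
    .of_continuousOn_of_forall_notMem_eq_zero hsupp hpos (by fun_prop)
      fun y hy => by simp [hA0 y hy]
  have hI₂ : IntegrableOn (fun y => Lf y / y * Aop f y ^ 2 * y) (Ioi 0) :=
    .of_continuousOn_of_forall_notMem_eq_zero hsupp hpos
      (by fun_prop (disch := intro x (hx : 0 < x); positivity)) fun y hy => by simp [hA0 y hy]
  have hWc : HasCompactSupport fun t => Lf t * Aop f t ^ 2 * t :=
    .intro hsupp fun y hy => by simp [hA0 y hy]
  have hFTC := integral_Ioi_of_hasDerivAt_of_hasCompactSupport
    (hasDerivAt_Lf_mul_Aop_sq_mul_id hf1 hf2 fun h => self_notMem_Ioi (hpos h))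
    ((hI₁.sub hI₂).const_mul 2) hWc
  rw [integral_const_mul, integral_sub hI₁ hI₂] at hFTC
  simpa [sub_eq_zero] using hFTC

lemma setIntegral_Lf_div_mul_sq_mul_id_nonpos (g : ℝ → ℝ) :
    ∫ y in Ioi 0, Lf y / y * g y ^ 2 * y ≤ 0 :=
  setIntegral_nonpos measurableSet_Ioi fun y (hy : 0 < y) =>
    mul_nonpos_of_nonpos_of_nonneg
      (mul_nonpos_of_nonpos_of_nonneg (div_neg_of_neg_of_pos (Lf_neg hy) hy).le (sq_nonneg _))
      hy.le

/-- Structure of `L`: `L' = (2Z-1)L/y` (equivalently `A(Lg) + L A*g = (2L/y)g`),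
`L < 0` on `(0,∞)`, and the resulting non-positivity
`∫ (Hf) L (Af) y dy = ∫ (L/y)(Af)² y dy ≤ 0`. -/
theorem L_structure :
    (∀ y > (0 : ℝ), Lf y = -4 * y / (1 + y ^ 2) ^ 2) ∧
    (∀ y > (0 : ℝ), deriv Lf y = (2 * Zf y - 1) * Lf y / y) ∧
    (∀ g : ℝ → ℝ, (∀ y > (0 : ℝ), DifferentiableAt ℝ g y) →
      ∀ y > (0 : ℝ),
        Aop (fun t => Lf t * g t) y + Lf y * Astar g y = 2 * Lf y / y * g y) ∧
    (∀ y > (0 : ℝ), Lf y < 0) ∧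
    (∀ f : ℝ → ℝ, ContDiff ℝ (⊤ : ℕ∞) f → HasCompactSupport f →
      tsupport f ⊆ Set.Ioi 0 →
      (∫ y in Set.Ioi (0 : ℝ), Hop f y * Lf y * Aop f y * y)
        = (∫ y in Set.Ioi (0 : ℝ), (Lf y / y) * (Aop f y) ^ 2 * y) ∧
      (∫ y in Set.Ioi (0 : ℝ), (Lf y / y) * (Aop f y) ^ 2 * y) ≤ 0) :=
  ⟨fun y _ => Lf_eq y,
    fun _ hy => (hasDerivAt_Lf hy.ne').deriv,
    fun _ hg y hy => Aop_Lf_mul_add_Lf_mul_Astar (hg y hy) hy.ne',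
    fun _ hy => Lf_neg hy,
    fun _ hf hsupp hpos =>
      ⟨integral_Hop_mul_Lf_mul_Aop (hf.of_le (WithTop.coe_le_coe.mpr le_top)) hsupp hpos,
        setIntegral_Lf_div_mul_sq_mul_id_nonpos _⟩⟩

end
end
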